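/- arXiv:1612.00056 — 2 statements merged into one kernel-verified Lean document; each statement's English description precedes it below -/
import Mathlib

section
/- Let 𝔾 = 𝕂 ⋉ ℍ with 𝕂 finite abelian acting on locally compact abelian ℍ, let λ be a character of ℍ with trivial stabilizer, and σ: ℍ/𝕂 → ℍ a section. Then the matrix elements of T^λ with respect to the character basis K̂ of ℂ^𝕂 satisfy t^λ_{m̂,n̂}(k, φ(h)σ(y)) = n̂(k)⁻¹ · [n̂·m̂⁻¹](h) · Σ_{ℓ∈𝕂} λ(φ(ℓ)σ(y)) · [n̂·m̂⁻¹](ℓ)⁻¹, for all k,h ∈ 𝕂, y ∈ ℍ/𝕂. -/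
/-! Substituting `ℓ ↦ h ℓ⁻¹` in the defining sum turns `λ(φ(ℓ⁻¹)φ(h)x)` into `λ(φ(ℓ)x)`, and
multiplicativity of `n̂` and `m̂` then pulls the factors depending on `k` and `h` out of the sum. -/

open scoped ComplexConjugate

/-- `(T^λ(k,x)v)(h) = λ(φ(h⁻¹)x) · v(k⁻¹h)`, the operator
`T^λ(k,x) = diag_h((φ(h)λ)(x)) S(k)` on `ℂ^𝕂`. -/
noncomputable def Trep {K H : Type*} [CommGroup K] [CommGroup H]
    (φ : K →* MulAut H) (lam : H →* Circle) (k : K) (x : H)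
    (v : K → ℂ) (h : K) : ℂ :=
  (lam (φ h⁻¹ x) : ℂ) * v (k⁻¹ * h)

/-- The matrix coefficient `t^λ_{m̂,n̂}(g) = Σ_ℓ (T^λ(g)n̂)(ℓ) conj(m̂(ℓ))` of `T^λ` with
respect to the character basis of `ℂ^𝕂`. -/
noncomputable def tCoeff {K H : Type*} [CommGroup K] [Fintype K] [CommGroup H]
    (φ : K →* MulAut H) (lam : H →* Circle) (mhat nhat : K →* Circle)
    (k : K) (x : H) : ℂ :=
  ∑ ℓ : K, Trep φ lam k x (fun r => (nhat r : ℂ)) ℓ * conj ((mhat ℓ : ℂ))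

theorem MulAut.apply_mul_inv_inv_apply {K H : Type*} [Group K] [Group H]
    (φ : K →* MulAut H) (h ℓ : K) (x : H) : φ (h * ℓ⁻¹)⁻¹ (φ h x) = φ ℓ x := by
  rw [← MulAut.mul_apply, ← map_mul, mul_inv_rev, inv_inv, inv_mul_cancel_right]

section

variable {K H : Type*} [CommGroup K] [Fintype K] [CommGroup H]
  (φ : K →* MulAut H) (lam : H →* Circle) (mhat nhat : K →* Circle)

theorem tCoeff_eq_sum (k : K) (x : H) :
    tCoeff φ lam mhat nhat k x =
      ∑ ℓ : K, ((lam (φ ℓ⁻¹ x) * (nhat (k⁻¹ * ℓ) * (mhat ℓ)⁻¹) : Circle) : ℂ) := by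
  simp only [tCoeff, Trep, ← Circle.coe_inv_eq_conj, Circle.coe_mul, mul_assoc]

theorem tCoeff_mulAut_apply (k h : K) (x : H) :
    tCoeff φ lam mhat nhat k (φ h x) =
      ((nhat k)⁻¹ * (nhat / mhat) h : Circle) *
        ∑ ℓ : K, ((lam (φ ℓ x) * ((nhat / mhat) ℓ)⁻¹ : Circle) : ℂ) := by
  rw [tCoeff_eq_sum, ← Equiv.sum_comp ((Equiv.inv K).trans (Equiv.mulLeft h)), Finset.mul_sum]
  refine Finset.sum_congr rfl fun ℓ _ => ?_
  have hchar : nhat (k⁻¹ * (h * ℓ⁻¹)) * (mhat (h * ℓ⁻¹))⁻¹ =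
      (nhat k)⁻¹ * (nhat / mhat) h * ((nhat / mhat) ℓ)⁻¹ := by
    simp only [MonoidHom.div_apply, map_mul, map_inv]
    simp only [div_eq_mul_inv, mul_inv, inv_inv, mul_comm, mul_left_comm, mul_assoc]
  simp only [Equiv.trans_apply, Equiv.inv_apply, Equiv.coe_mulLeft,
    MulAut.apply_mul_inv_inv_apply, hchar, ← Circle.coe_mul]
  congr 1
  ac_rfl

end

theorem tCoeff_eq_general {K H : Type*} [CommGroup K] [Fintype K] [CommGroup H]
    (φ : K →* MulAut H) (lam : H →* Circle)
    (Y : Type*) (σ : Y → H) (mhat nhat : K →* Circle) (k h : K) (y : Y) :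
    tCoeff φ lam mhat nhat k (φ h (σ y)) =
      (nhat k : ℂ)⁻¹ * ((nhat h : ℂ) * (mhat h : ℂ)⁻¹) *
        ∑ ℓ : K, (lam (φ ℓ (σ y)) : ℂ) * ((nhat ℓ : ℂ) * (mhat ℓ : ℂ)⁻¹)⁻¹ := by
  simpa [div_eq_mul_inv] using tCoeff_mulAut_apply φ lam mhat nhat k h (σ y)

/-- Matrix elements of `T^λ` in the character basis: for any section `σ : ℍ/𝕂 → ℍ`,
`t^λ_{m̂,n̂}(k, φ(h)σ(y)) = n̂(k)⁻¹ [n̂ m̂⁻¹](h) Σ_ℓ λ(φ(ℓ)σ(y)) [n̂ m̂⁻¹](ℓ)⁻¹`. -/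
theorem tCoeff_eq {K H : Type*} [CommGroup K] [Fintype K] [CommGroup H]
    (φ : K →* MulAut H) (lam : H →* Circle)
    (hlam : ∀ k : K, (∀ x : H, lam (φ k x) = lam x) → k = 1)
    (Y : Type*) (σ : Y → H) (mhat nhat : K →* Circle) (k h : K) (y : Y) :
    tCoeff φ lam mhat nhat k (φ h (σ y)) =
      (nhat k : ℂ)⁻¹ * ((nhat h : ℂ) * (mhat h : ℂ)⁻¹) *
        ∑ ℓ : K, (lam (φ ℓ (σ y)) : ℂ) * ((nhat ℓ : ℂ) * (mhat ℓ : ℂ)⁻¹)⁻¹ :=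
  tCoeff_eq_general φ lam Y σ mhat nhat k h y
end

section
/- With 𝔾 = 𝕂 ⋉ ℍ, 𝕂 finite abelian of order N, F a finite set of characters of ℍ with trivial stabilizers, and fixed section σ: ℍ/𝕂 → ℍ: for each n̂ ∈ K̂, k ∈ 𝕂 and φ-coefficients φ ∈ ℂ^F, the function f = ℱ_AP⁻¹(δ_k ⊗ n̂ ⊗ φ) given by f(h,x) = Σ_{λ∈F} Σ_{ℓ∈𝕂} (φ(ℓh)λ)(x) δ_k(h) n̂(ℓ) φ(λ) satisfies f(h, φ(r)σ(y)) = δ_k(h) · conj(n̂(h)) · n̂(r) · 𝒥_{n̂}φ(y), where 𝒥_{n̂}φ(y) = Σ_{λ∈F} J_{n̂}(λ,y)φ(λ) and J_{n̂}(λ,y) = Σ_{s∈𝕂} λ(φ(s)σ(y)) conj(n̂(s)). -/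
open scoped ComplexConjugate

/-- The generalized Bessel function of parameter `n̂ ∈ K̂` relative to the section `σ`:
`J_{n̂}(λ,y) = Σ_{s∈𝕂} λ(φ(s)σ(y)) conj(n̂(s))`. -/
noncomputable def genBessel {K H Y : Type*} [CommGroup K] [Fintype K] [CommGroup H]
    (φ : K →* MulAut H) (σ : Y → H) (nhat : K →* Circle) (lam : H →* Circle) (y : Y) : ℂ :=
  ∑ s : K, (lam (φ s (σ y)) : ℂ) * conj ((nhat s : ℂ))

/-- The generalized Fourier–Bessel operator `𝒥_{n̂}φ(y) = Σ_{λ∈F} J_{n̂}(λ,y)φ(λ)`. -/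
noncomputable def genFourierBessel {K H Y : Type*} [CommGroup K] [Fintype K] [CommGroup H]
    (φ : K →* MulAut H) (σ : Y → H) (F : Finset (H →* Circle)) (nhat : K →* Circle)
    (c : (H →* Circle) → ℂ) (y : Y) : ℂ :=
  ∑ lam ∈ F, genBessel φ σ nhat lam y * c lam

theorem Circle.conj_coe_monoidHom_apply {K : Type*} [Group K] (χ : K →* Circle) (a : K) :
    conj (χ a : ℂ) = χ a⁻¹ := by
  rw [map_inv, Circle.coe_inv_eq_conj]

theorem Fintype.sum_mul_character_reindex {K : Type*} [CommGroup K] [Fintype K]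
    (χ : K →* Circle) (f : K → ℂ) (h r : K) :
    ∑ ℓ : K, f ((ℓ * h)⁻¹ * r) * χ ℓ = conj (χ h : ℂ) * χ r * ∑ s : K, f s * conj (χ s : ℂ) := by
  rw [Finset.mul_sum]
  refine Fintype.sum_equiv ((Equiv.mulRight h).trans ((Equiv.inv K).trans (Equiv.mulRight r)))
    _ _ fun ℓ => ?_
  have hχ : (χ ℓ : ℂ) = conj (χ h : ℂ) * χ r * conj (χ ((ℓ * h)⁻¹ * r) : ℂ) := by
    simp only [Circle.conj_coe_monoidHom_apply, ← Circle.coe_mul, ← map_mul]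
    congr 2
    simp [mul_comm, mul_left_comm]
  simp only [Equiv.trans_apply, Equiv.coe_mulRight, Equiv.inv_apply, hχ]
  ring

theorem ap_inverse_factorization_general {K H Y : Type*} [CommGroup K] [Fintype K] [DecidableEq K]
    [CommGroup H] (φ : K →* MulAut H) (σ : Y → H) (F : Finset (H →* Circle))
    (nhat : K →* Circle) (k : K) (c : (H →* Circle) → ℂ) (h r : K) (y : Y) :
    ∑ lam ∈ F, ∑ ℓ : K,
        (lam (φ (ℓ * h)⁻¹ (φ r (σ y))) : ℂ) * (if h = k then 1 else 0) * (nhat ℓ : ℂ) * c lam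
      = (if h = k then 1 else 0) * conj ((nhat h : ℂ)) * (nhat r : ℂ) *
          genFourierBessel φ σ F nhat c y := by
  unfold genFourierBessel genBessel
  rw [Finset.mul_sum]
  refine Finset.sum_congr rfl fun lam _ => ?_
  have hφ : ∀ ℓ : K, φ (ℓ * h)⁻¹ (φ r (σ y)) = φ ((ℓ * h)⁻¹ * r) (σ y) := fun ℓ => by
    rw [map_mul, MulAut.mul_apply]
  simp only [hφ, mul_right_comm _ (if h = k then (1 : ℂ) else 0), ← Finset.sum_mul,
    Fintype.sum_mul_character_reindex nhat (fun s => (lam (φ s (σ y)) : ℂ))]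
  ring

/-- Factorization of `ℱ_AP⁻¹` through the generalized Fourier–Bessel operator: the function
`f = ℱ_AP⁻¹(δ_k ⊗ n̂ ⊗ c)`, `f(h,x) = Σ_{λ∈F} Σ_{ℓ∈𝕂} (φ(ℓh)λ)(x) δ_k(h) n̂(ℓ) c(λ)`,
satisfies `f(h, φ(r)σ(y)) = δ_k(h) conj(n̂(h)) n̂(r) 𝒥_{n̂}c(y)`. -/
theorem ap_inverse_factorization {K H Y : Type*} [CommGroup K] [Fintype K] [DecidableEq K]
    [CommGroup H] (φ : K →* MulAut H) (σ : Y → H) (F : Finset (H →* Circle))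
    (hF : ∀ lam ∈ F, ∀ k : K, (∀ x : H, lam (φ k x) = lam x) → k = 1)
    (nhat : K →* Circle) (k : K) (c : (H →* Circle) → ℂ) (h r : K) (y : Y) :
    ∑ lam ∈ F, ∑ ℓ : K,
        (lam (φ (ℓ * h)⁻¹ (φ r (σ y))) : ℂ) * (if h = k then 1 else 0) * (nhat ℓ : ℂ) * c lam
      = (if h = k then 1 else 0) * conj ((nhat h : ℂ)) * (nhat r : ℂ) *
          genFourierBessel φ σ F nhat c y :=
  ap_inverse_factorization_general φ σ F nhat k c h r y
end
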